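/- Under the IV assumptions, the weight ω = 1 − Z(1−W)/P(W=0|X) − (1−Z)W/P(W=1|X) satisfies E[ω | X] = P(G = co | X) almost surely; in particular E[ω] = P(G = co). -/

import Mathlib

open MeasureTheory ProbabilityTheory



lemma ind_int {α : Type*} {mα : MeasurableSpace α} (μ : Measure α) [IsFiniteMeasure μ]
    {s : Set α} (hs : MeasurableSet s) :
    Integrable (Set.indicator s fun _ => (1:ℝ)) μ :=
  (integrable_const 1).indicator hs

lemma ind_integral {α : Type*} {mα : MeasurableSpace α} (μ : Measure α) {s : Set α}
    (hs : MeasurableSet s) :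
    ∫ x, s.indicator (fun _ => (1:ℝ)) x ∂μ = (μ s).toReal := by
  rw [integral_indicator_const (1:ℝ) hs]; simp [measureReal_def]

lemma aux_div {Ω : Type*} [m : MeasurableSpace Ω]
    (μ : Measure Ω) [IsProbabilityMeasure μ]
    (mX : MeasurableSpace Ω) (hXm : mX ≤ m)
    {S T : Set Ω} (hS : MeasurableSet[m] S) (hT : MeasurableSet[m] T) (hST : S ⊆ T) :
    Integrable (fun ω => Set.indicator S (fun _ => (1:ℝ)) ω
        / (μ[Set.indicator T (fun _ => (1:ℝ)) | mX]) ω) μ ∧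
    (μ[fun ω => Set.indicator S (fun _ => (1:ℝ)) ω
        / (μ[Set.indicator T (fun _ => (1:ℝ)) | mX]) ω | mX])
      =ᵐ[μ] fun ω => (μ[Set.indicator S (fun _ => (1:ℝ)) | mX]) ω
        / (μ[Set.indicator T (fun _ => (1:ℝ)) | mX]) ω := by
  haveI : SigmaFinite (μ.trim hXm) := by
    haveI : IsFiniteMeasure (μ.trim hXm) := isFiniteMeasure_trim hXm
    infer_instance
  set e : Ω → ℝ := μ[Set.indicator T (fun _ => (1:ℝ)) | mX] with he_def
  have heSM : StronglyMeasurable[mX] e := stronglyMeasurable_condExp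
  have he_meas : Measurable[m] e := (heSM.mono hXm).measurable
  have heS_int : Integrable (Set.indicator S (fun _ => (1:ℝ))) μ :=
    ind_int μ hS
  have heT_int : Integrable (Set.indicator T (fun _ => (1:ℝ))) μ :=
    ind_int μ hT
  have he0 : 0 ≤ᵐ[μ] e :=
    condExp_nonneg (Filter.Eventually.of_forall fun ω =>
      Set.indicator_nonneg (fun _ _ => zero_le_one) ω)
  have hSle : μ[Set.indicator S (fun _ => (1:ℝ)) | mX] ≤ᵐ[μ] e :=
    condExp_mono heS_int heT_int
      (Filter.Eventually.of_forall fun ω =>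
        Set.indicator_le_indicator_apply_of_subset hST zero_le_one)
  have hS0 : 0 ≤ᵐ[μ] μ[Set.indicator S (fun _ => (1:ℝ)) | mX] :=
    condExp_nonneg (Filter.Eventually.of_forall fun ω =>
      Set.indicator_nonneg (fun _ _ => zero_le_one) ω)
  -- the sets where e is bounded below
  set E : ℕ → Set Ω := fun n => {ω | ((n:ℝ)+1)⁻¹ ≤ e ω} with hE_def
  have hEmX : ∀ n, MeasurableSet[mX] (E n) := fun n =>
    heSM.measurable measurableSet_Ici
  have hEm : ∀ n, MeasurableSet[m] (E n) := fun n => hXm _ (hEmX n)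
  have hnpos : ∀ n : ℕ, (0:ℝ) < ((n:ℝ)+1)⁻¹ := fun n => by positivity
  have hEmono : Monotone E := by
    intro a b hab ω hω
    simp only [hE_def, Set.mem_setOf_eq] at hω ⊢
    refine le_trans ?_ hω
    apply inv_anti₀ (by positivity)
    have : (a:ℝ) ≤ b := Nat.cast_le.mpr hab
    linarith
  set g : ℕ → Ω → ℝ := fun n => (E n).indicator (fun ω => (e ω)⁻¹) with hg_def
  have hgSM : ∀ n, StronglyMeasurable[mX] (g n) := fun n =>
    (heSM.measurable.inv.stronglyMeasurable).indicator (hEmX n)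
  have hg_nonneg : ∀ n ω, 0 ≤ g n ω := by
    intro n ω
    by_cases hω : ω ∈ E n
    · rw [hg_def]; simp only [Set.indicator_of_mem hω]
      exact inv_nonneg.mpr (le_trans (hnpos n).le hω)
    · rw [hg_def]; simp [Set.indicator_of_notMem hω]
  have hg_bound : ∀ n ω, ‖g n ω‖ ≤ (n:ℝ)+1 := by
    intro n ω
    by_cases hω : ω ∈ E n
    · rw [hg_def]; simp only [Set.indicator_of_mem hω]
      rw [Real.norm_eq_abs, abs_of_nonneg (inv_nonneg.mpr (le_trans (hnpos n).le hω))]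
      calc (e ω)⁻¹ ≤ (((n:ℝ)+1)⁻¹)⁻¹ := inv_anti₀ (hnpos n) hω
        _ = (n:ℝ)+1 := inv_inv _
    · rw [hg_def]; simp only [Set.indicator_of_notMem hω, norm_zero]; positivity
  have hgh_int : ∀ n, Integrable (g n * Set.indicator S (fun _ => (1:ℝ))) μ := by
    intro n
    exact heS_int.bdd_mul ((hgSM n).mono hXm).aestronglyMeasurable (c := (n:ℝ)+1) (Filter.Eventually.of_forall (hg_bound n))
  have hpull : ∀ n, μ[g n * Set.indicator S (fun _ => (1:ℝ)) | mX]
      =ᵐ[μ] g n * μ[Set.indicator S (fun _ => (1:ℝ)) | mX] := fun n =>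
    condExp_stronglyMeasurable_mul_of_bound hXm (hgSM n) heS_int ((n:ℝ)+1)
      (Filter.Eventually.of_forall (hg_bound n))
  have hge_le_one : ∀ n ω, g n ω * e ω ≤ 1 := by
    intro n ω
    by_cases hω : ω ∈ E n
    · rw [hg_def]; simp only [Set.indicator_of_mem hω]
      rw [inv_mul_cancel₀ (ne_of_gt (lt_of_lt_of_le (hnpos n) hω))]
    · rw [hg_def]; simp [Set.indicator_of_notMem hω]
  have hint_le : ∀ n, ∫ ω, (g n * Set.indicator S (fun _ => (1:ℝ))) ω ∂μ ≤ 1 := by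
    intro n
    rw [← integral_condExp hXm]
    have h1 : ∫ ω, (μ[g n * Set.indicator S (fun _ => (1:ℝ)) | mX]) ω ∂μ
        = ∫ ω, (g n * μ[Set.indicator S (fun _ => (1:ℝ)) | mX]) ω ∂μ :=
      integral_congr_ae (hpull n)
    rw [h1]
    have hint1 : Integrable (g n * μ[Set.indicator S (fun _ => (1:ℝ)) | mX]) μ :=
      integrable_condExp.bdd_mul ((hgSM n).mono hXm).aestronglyMeasurable (c := (n:ℝ)+1) (Filter.Eventually.of_forall (hg_bound n))
    have hint2 : Integrable (fun ω => g n ω * e ω) μ :=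
      integrable_condExp.bdd_mul ((hgSM n).mono hXm).aestronglyMeasurable (c := (n:ℝ)+1) (Filter.Eventually.of_forall (hg_bound n))
    calc ∫ ω, (g n * μ[Set.indicator S (fun _ => (1:ℝ)) | mX]) ω ∂μ
        ≤ ∫ ω, g n ω * e ω ∂μ := by
          refine integral_mono_ae hint1 hint2 ?_
          filter_upwards [hSle] with ω hω
          exact mul_le_mul_of_nonneg_left hω (hg_nonneg n ω)
      _ ≤ ∫ _ω, (1:ℝ) ∂μ := by
          refine integral_mono hint2 (integrable_const 1) ?_
          intro ω; exact hge_le_one n ω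
      _ = 1 := by simp
  set f : Ω → ℝ := fun ω => Set.indicator S (fun _ => (1:ℝ)) ω / e ω with hf_def
  have hf_m : Measurable[m] f := (measurable_const.indicator hS).div he_meas
  have key : ∀ n ω, ENNReal.ofReal ((g n * Set.indicator S (fun _ => (1:ℝ))) ω)
      = (E n).indicator (fun ω => ENNReal.ofReal (f ω)) ω := by
    intro n ω
    by_cases hω : ω ∈ E n
    · rw [hg_def, hf_def]
      simp only [Pi.mul_apply, Set.indicator_of_mem hω]
      rw [div_eq_mul_inv, mul_comm]
    · rw [hg_def]
      simp only [Pi.mul_apply, Set.indicator_of_notMem hω, zero_mul, ENNReal.ofReal_zero]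
  have hlin : ∀ n, ∫⁻ ω, (E n).indicator (fun ω => ENNReal.ofReal (f ω)) ω ∂μ ≤ 1 := by
    intro n
    have h1 : ∫⁻ ω, (E n).indicator (fun ω => ENNReal.ofReal (f ω)) ω ∂μ
        = ∫⁻ ω, ENNReal.ofReal ((g n * Set.indicator S (fun _ => (1:ℝ))) ω) ∂μ :=
      lintegral_congr fun ω => (key n ω).symm
    have h2 := ofReal_integral_eq_lintegral_ofReal (hgh_int n)
      (Filter.Eventually.of_forall fun ω =>
        mul_nonneg (hg_nonneg n ω) (Set.indicator_nonneg (fun _ _ => zero_le_one) ω))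
    rw [h1, ← h2]
    calc ENNReal.ofReal (∫ ω, (g n * Set.indicator S (fun _ => (1:ℝ))) ω ∂μ)
        ≤ ENNReal.ofReal 1 := ENNReal.ofReal_le_ofReal (hint_le n)
      _ = 1 := ENNReal.ofReal_one
  have hsup : ∀ᵐ ω ∂μ, ENNReal.ofReal (f ω)
      = ⨆ n, (E n).indicator (fun ω => ENNReal.ofReal (f ω)) ω := by
    filter_upwards [he0] with ω hω
    rcases eq_or_lt_of_le hω with heq | hpos
    · have hf0 : f ω = 0 := by rw [hf_def]; simp [← heq]
      rw [hf0, ENNReal.ofReal_zero]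
      symm
      simp only [ENNReal.iSup_eq_zero]
      intro n
      by_cases hmem : ω ∈ E n
      · rw [Set.indicator_of_mem hmem, hf0, ENNReal.ofReal_zero]
      · rw [Set.indicator_of_notMem hmem]
    · obtain ⟨n, hn⟩ := exists_nat_ge (e ω)⁻¹
      have hmem : ω ∈ E n := by
        show ((n:ℝ)+1)⁻¹ ≤ e ω
        rw [← inv_inv (e ω)]
        apply inv_anti₀ (inv_pos.mpr hpos)
        linarith
      apply le_antisymm
      · refine le_trans ?_ (le_iSup _ n)
        rw [Set.indicator_of_mem hmem]
      · exact iSup_le fun k => Set.indicator_le_self _ _ ω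
  have hfin : HasFiniteIntegral f μ := by
    rw [hasFiniteIntegral_iff_norm]
    have h1 : ∀ᵐ ω ∂μ, ENNReal.ofReal ‖f ω‖ = ENNReal.ofReal (f ω) := by
      filter_upwards [he0] with ω hω
      rw [Real.norm_eq_abs, abs_of_nonneg
        (div_nonneg (Set.indicator_nonneg (fun _ _ => zero_le_one) ω) hω)]
    calc ∫⁻ ω, ENNReal.ofReal ‖f ω‖ ∂μ
        = ∫⁻ ω, ENNReal.ofReal (f ω) ∂μ := lintegral_congr_ae h1
      _ = ∫⁻ ω, ⨆ n, (E n).indicator (fun ω => ENNReal.ofReal (f ω)) ω ∂μ :=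
          lintegral_congr_ae hsup
      _ = ⨆ n, ∫⁻ ω, (E n).indicator (fun ω => ENNReal.ofReal (f ω)) ω ∂μ := by
          refine lintegral_iSup (fun n => (hf_m.ennreal_ofReal).indicator (hEm n)) ?_
          intro i j hij ω
          exact Set.indicator_le_indicator_apply_of_subset (hEmono hij) (zero_le ..)
      _ ≤ 1 := iSup_le hlin
      _ < ⊤ := ENNReal.one_lt_top
  have hf_int : Integrable f μ := ⟨hf_m.aestronglyMeasurable, hfin⟩
  have heqf : (fun ω => (e ω)⁻¹) * (Set.indicator S (fun _ => (1:ℝ))) = f := by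
    funext ω
    rw [hf_def]
    simp only [Pi.mul_apply]
    rw [div_eq_mul_inv, mul_comm]
  have hpull2 := condExp_mul_of_stronglyMeasurable_left (μ := μ) (m := mX)
    (heSM.measurable.inv.stronglyMeasurable)
    (heqf ▸ hf_int) heS_int
  rw [show e⁻¹ * Set.indicator S (fun _ => (1:ℝ)) = f from heqf] at hpull2
  refine ⟨hf_int, hpull2.trans (Filter.Eventually.of_forall fun ω => ?_)⟩
  simp only [Pi.mul_apply, Pi.inv_apply]
  rw [div_eq_mul_inv, mul_comm]

/-- Under the IV assumptions (instrument unconfoundedness `(Z₀,Z₁) ⟂ W | X`,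
monotonicity `P(Z₀ > Z₁ | X) = 0` a.s., and `0 < P(W=1|X) < 1` a.s.), the weight
`ω = 1 − Z(1−W)/P(W=0|X) − (1−Z)W/P(W=1|X)` satisfies `E[ω | X] = P(G = co | X)`
almost surely; in particular `E[ω] = P(G = co)`, where `G = co` is the complier event
`{Z₁ > Z₀} = {Z₀ = 0, Z₁ = 1}`. -/
theorem abadie_weight_condexp
    {Ω : Type*} (mX : MeasurableSpace Ω) [m : MeasurableSpace Ω] [StandardBorelSpace Ω] [Nonempty Ω]
    (μ : Measure Ω) [IsProbabilityMeasure μ]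
    (hXm : mX ≤ m)
    (W Z Z0 Z1 : Ω → ℝ)
    (hWmeas : Measurable W) (hZ0meas : Measurable Z0) (hZ1meas : Measurable Z1)
    (hW01 : ∀ ω, W ω = 0 ∨ W ω = 1)
    (hZ001 : ∀ ω, Z0 ω = 0 ∨ Z0 ω = 1)
    (hZ101 : ∀ ω, Z1 ω = 0 ∨ Z1 ω = 1)
    (hZdef : ∀ ω, Z ω = W ω * Z1 ω + (1 - W ω) * Z0 ω)
    (hindep : CondIndepFun mX hXm (fun ω => (Z0 ω, Z1 ω)) W μ)
    (hmono : ∀ᵐ ω ∂μ,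
      (μ[Set.indicator {ω' | Z1 ω' < Z0 ω'} (fun _ => (1:ℝ)) | mX]) ω = 0)
    (hfirst : ∀ᵐ ω ∂μ,
      0 < (μ[Set.indicator (W ⁻¹' {1}) (fun _ => (1:ℝ)) | mX]) ω ∧
      (μ[Set.indicator (W ⁻¹' {1}) (fun _ => (1:ℝ)) | mX]) ω < 1) :
    (μ[fun ω => 1 - Z ω * (1 - W ω) / (μ[Set.indicator (W ⁻¹' {0}) (fun _ => (1:ℝ)) | mX]) ω
          - (1 - Z ω) * W ω / (μ[Set.indicator (W ⁻¹' {1}) (fun _ => (1:ℝ)) | mX]) ω | mX])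
        =ᵐ[μ] μ[Set.indicator {ω' | Z0 ω' = 0 ∧ Z1 ω' = 1} (fun _ => (1:ℝ)) | mX] ∧
    ∫ ω, (1 - Z ω * (1 - W ω) / (μ[Set.indicator (W ⁻¹' {0}) (fun _ => (1:ℝ)) | mX]) ω
          - (1 - Z ω) * W ω / (μ[Set.indicator (W ⁻¹' {1}) (fun _ => (1:ℝ)) | mX]) ω) ∂μ
        = (μ {ω' | Z0 ω' = 0 ∧ Z1 ω' = 1}).toReal := by
  haveI : SigmaFinite (μ.trim hXm) := by
    haveI : IsFiniteMeasure (μ.trim hXm) := isFiniteMeasure_trim hXm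
    infer_instance
  -- measurable sets
  have hWm : Measurable[m] W := hWmeas
  have hZ0m : Measurable[m] Z0 := hZ0meas
  have hZ1m : Measurable[m] Z1 := hZ1meas
  have hW1m : MeasurableSet[m] (W ⁻¹' {1}) := hWm (measurableSet_singleton 1)
  have hW0m : MeasurableSet[m] (W ⁻¹' {0}) := hWm (measurableSet_singleton 0)
  have hZ01m : MeasurableSet[m] (Z0 ⁻¹' {1}) := hZ0m (measurableSet_singleton 1)
  have hZ10m : MeasurableSet[m] (Z1 ⁻¹' {0}) := hZ1m (measurableSet_singleton 0)
  have hS0m : MeasurableSet[m] (W ⁻¹' {0} ∩ Z0 ⁻¹' {1}) := hW0m.inter hZ01m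
  have hS1m : MeasurableSet[m] (W ⁻¹' {1} ∩ Z1 ⁻¹' {0}) := hW1m.inter hZ10m
  have hcom : MeasurableSet[m] {ω' | Z0 ω' = 0 ∧ Z1 ω' = 1} :=
    (hZ0m (measurableSet_singleton 0)).inter (hZ1m (measurableSet_singleton 1))
  have hnegm : MeasurableSet[m] {ω' | Z1 ω' < Z0 ω'} := measurableSet_lt hZ1m hZ0m
  set e1 : Ω → ℝ := μ[Set.indicator (W ⁻¹' {1}) (fun _ => (1:ℝ)) | mX] with he1_def
  set e0 : Ω → ℝ := μ[Set.indicator (W ⁻¹' {0}) (fun _ => (1:ℝ)) | mX] with he0_def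
  -- pointwise identities for the numerators
  have hw0 : ∀ ω, Z ω * (1 - W ω)
      = Set.indicator (W ⁻¹' {0} ∩ Z0 ⁻¹' {1}) (fun _ => (1:ℝ)) ω := by
    intro ω
    have hmem : ω ∈ W ⁻¹' {0} ∩ Z0 ⁻¹' {1} ↔ (W ω = 0 ∧ Z0 ω = 1) := by
      simp [Set.mem_inter_iff]
    rcases hW01 ω with h | h <;> rcases hZ001 ω with h0 | h0 <;>
      simp [Set.indicator_apply, hmem, hZdef, h, h0]
  have hw1 : ∀ ω, (1 - Z ω) * W ω
      = Set.indicator (W ⁻¹' {1} ∩ Z1 ⁻¹' {0}) (fun _ => (1:ℝ)) ω := by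
    intro ω
    have hmem : ω ∈ W ⁻¹' {1} ∩ Z1 ⁻¹' {0} ↔ (W ω = 1 ∧ Z1 ω = 0) := by
      simp [Set.mem_inter_iff]
    rcases hW01 ω with h | h <;> rcases hZ101 ω with h1 | h1 <;>
      simp [Set.indicator_apply, hmem, hZdef, h, h1]
  have hfun : (fun ω => 1 - Z ω * (1 - W ω) / e0 ω - (1 - Z ω) * W ω / e1 ω)
      = fun ω => 1 - Set.indicator (W ⁻¹' {0} ∩ Z0 ⁻¹' {1}) (fun _ => (1:ℝ)) ω / e0 ω
          - Set.indicator (W ⁻¹' {1} ∩ Z1 ⁻¹' {0}) (fun _ => (1:ℝ)) ω / e1 ω :=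
    funext fun ω => by rw [hw0 ω, hw1 ω]
  -- integrability and pull-out from the auxiliary lemma
  obtain ⟨hint0, hce0⟩ := aux_div (m := m) μ mX hXm hS0m hW0m Set.inter_subset_left
  obtain ⟨hint1, hce1⟩ := aux_div (m := m) μ mX hXm hS1m hW1m Set.inter_subset_left
  -- conditional independence products
  have hci := (condIndepFun_iff_condExp_inter_preimage_eq_mul
    (hZ0m.prodMk hZ1m) hWm).mp hindep
  have hprod0 := hci (Prod.fst ⁻¹' {1}) {0}
    (measurable_fst (measurableSet_singleton 1)) (measurableSet_singleton 0)
  have hprod1 := hci (Prod.snd ⁻¹' {0}) {1}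
    (measurable_snd (measurableSet_singleton 0)) (measurableSet_singleton 1)
  have hpre0 : (fun ω => (Z0 ω, Z1 ω)) ⁻¹' (Prod.fst ⁻¹' {1}) = Z0 ⁻¹' {1} := rfl
  have hpre1 : (fun ω => (Z0 ω, Z1 ω)) ⁻¹' (Prod.snd ⁻¹' {0}) = Z1 ⁻¹' {0} := rfl
  rw [hpre0, Set.inter_comm] at hprod0
  rw [hpre1, Set.inter_comm] at hprod1
  -- positivity of e0 and e1
  have hindW : Set.indicator (W ⁻¹' {0}) (fun _ => (1:ℝ))
      = (fun _ => (1:ℝ)) - Set.indicator (W ⁻¹' {1}) (fun _ => (1:ℝ)) := by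
    funext ω
    rcases hW01 ω with h | h <;> simp [Set.indicator_apply, h]
  have he0e1 : e0 =ᵐ[μ] fun ω => 1 - e1 ω := by
    rw [he0_def, hindW]
    refine (condExp_sub (integrable_const 1) (ind_int μ hW1m) (m := mX)).trans ?_
    rw [condExp_const hXm (1:ℝ)]
    exact Filter.Eventually.of_forall fun ω => rfl
  have he1pos : ∀ᵐ ω ∂μ, 0 < e1 ω := by filter_upwards [hfirst] with ω h; exact h.1
  have he0pos : ∀ᵐ ω ∂μ, 0 < e0 ω := by
    filter_upwards [hfirst, he0e1] with ω h1 h2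
    rw [h2]; linarith [h1.2]
  -- conditional expectations of the two ratio terms
  have hA : (μ[fun ω => Set.indicator (W ⁻¹' {0} ∩ Z0 ⁻¹' {1}) (fun _ => (1:ℝ)) ω / e0 ω | mX])
      =ᵐ[μ] μ[Set.indicator (Z0 ⁻¹' {1}) (fun _ => (1:ℝ)) | mX] := by
    refine hce0.trans ?_
    filter_upwards [hprod0, he0pos] with ω hp hpos
    rw [hp, mul_div_cancel_right₀ _ (ne_of_gt hpos)]
  have hB : (μ[fun ω => Set.indicator (W ⁻¹' {1} ∩ Z1 ⁻¹' {0}) (fun _ => (1:ℝ)) ω / e1 ω | mX])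
      =ᵐ[μ] μ[Set.indicator (Z1 ⁻¹' {0}) (fun _ => (1:ℝ)) | mX] := by
    refine hce1.trans ?_
    filter_upwards [hprod1, he1pos] with ω hp hpos
    rw [hp, mul_div_cancel_right₀ _ (ne_of_gt hpos)]
  -- conditional expectation of the weight
  set A : Ω → ℝ := fun ω => Set.indicator (W ⁻¹' {0} ∩ Z0 ⁻¹' {1}) (fun _ => (1:ℝ)) ω / e0 ω
    with hA_def
  set B : Ω → ℝ := fun ω => Set.indicator (W ⁻¹' {1} ∩ Z1 ⁻¹' {0}) (fun _ => (1:ℝ)) ω / e1 ω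
    with hB_def
  have hw_int : Integrable (fun ω => 1 - A ω - B ω) μ :=
    (((integrable_const 1).sub hint0).sub hint1 :)
  have hcw : (μ[fun ω => 1 - A ω - B ω | mX]) =ᵐ[μ]
      fun ω => 1 - (μ[Set.indicator (Z0 ⁻¹' {1}) (fun _ => (1:ℝ)) | mX]) ω
        - (μ[Set.indicator (Z1 ⁻¹' {0}) (fun _ => (1:ℝ)) | mX]) ω := by
    have h1 : (μ[((fun _ => (1:ℝ)) - A) - B | mX])
        =ᵐ[μ] μ[(fun _ => (1:ℝ)) - A | mX] - μ[B | mX] :=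
      condExp_sub ((integrable_const 1).sub hint0) hint1 (m := mX)
    have h2 : (μ[(fun _ => (1:ℝ)) - A | mX]) =ᵐ[μ] μ[(fun _ => (1:ℝ)) | mX] - μ[A | mX] :=
      condExp_sub (integrable_const 1) hint0 (m := mX)
    have h3 : (fun ω => 1 - A ω - B ω) = ((fun _ => (1:ℝ)) - A) - B := rfl
    rw [h3]
    refine h1.trans ?_
    have h4 := condExp_const (μ := μ) hXm (1:ℝ)
    filter_upwards [h2, hA, hB] with ω h2ω hAω hBω
    simp only [Pi.sub_apply]
    rw [h2ω]
    simp only [Pi.sub_apply, h4]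
    rw [hAω, hBω]
  -- conditional expectation of the complier indicator
  have hco_point : Set.indicator {ω' | Z0 ω' = 0 ∧ Z1 ω' = 1} (fun _ => (1:ℝ))
      = fun ω => (1 - Set.indicator (Z0 ⁻¹' {1}) (fun _ => (1:ℝ)) ω
          - Set.indicator (Z1 ⁻¹' {0}) (fun _ => (1:ℝ)) ω)
          + Set.indicator {ω' | Z1 ω' < Z0 ω'} (fun _ => (1:ℝ)) ω := by
    funext ω
    rcases hZ001 ω with h0 | h0 <;> rcases hZ101 ω with h1 | h1 <;>
      norm_num [Set.indicator_apply, Set.mem_setOf_eq, h0, h1]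
  have hrhs : (μ[Set.indicator {ω' | Z0 ω' = 0 ∧ Z1 ω' = 1} (fun _ => (1:ℝ)) | mX]) =ᵐ[μ]
      fun ω => 1 - (μ[Set.indicator (Z0 ⁻¹' {1}) (fun _ => (1:ℝ)) | mX]) ω
        - (μ[Set.indicator (Z1 ⁻¹' {0}) (fun _ => (1:ℝ)) | mX]) ω := by
    rw [hco_point]
    have h5 : (fun ω => (1 - Set.indicator (Z0 ⁻¹' {1}) (fun _ => (1:ℝ)) ω
          - Set.indicator (Z1 ⁻¹' {0}) (fun _ => (1:ℝ)) ω)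
          + Set.indicator {ω' | Z1 ω' < Z0 ω'} (fun _ => (1:ℝ)) ω)
        = (((fun _ => (1:ℝ)) - Set.indicator (Z0 ⁻¹' {1}) (fun _ => (1:ℝ)))
            - Set.indicator (Z1 ⁻¹' {0}) (fun _ => (1:ℝ)))
          + Set.indicator {ω' | Z1 ω' < Z0 ω'} (fun _ => (1:ℝ)) := rfl
    rw [h5]
    have h6 := condExp_add
      (((integrable_const (1:ℝ)).sub (ind_int μ hZ01m)).sub (ind_int μ hZ10m))
      (ind_int μ hnegm) (m := mX)
    refine h6.trans ?_
    have h7 := condExp_sub ((integrable_const (1:ℝ)).sub (ind_int μ hZ01m))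
      (ind_int μ hZ10m) (m := mX)
    have h8 := condExp_sub (integrable_const (1:ℝ)) (ind_int μ hZ01m) (m := mX)
    have h4 := condExp_const (μ := μ) hXm (1:ℝ)
    filter_upwards [h7, h8, hmono] with ω h7ω h8ω hmω
    simp only [Pi.add_apply, Pi.sub_apply] at h7ω h8ω ⊢
    rw [h7ω, h8ω, hmω, h4]
    ring
  have hpart1 : (μ[fun ω => 1 - A ω - B ω | mX]) =ᵐ[μ]
      μ[Set.indicator {ω' | Z0 ω' = 0 ∧ Z1 ω' = 1} (fun _ => (1:ℝ)) | mX] :=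
    hcw.trans hrhs.symm
  constructor
  · rw [hfun]
    exact hpart1
  · rw [hfun]
    have : ∫ ω, (1 - A ω - B ω) ∂μ
        = ∫ ω, (μ[fun ω => 1 - A ω - B ω | mX]) ω ∂μ := (integral_condExp hXm).symm
    rw [this, integral_congr_ae hpart1, integral_condExp hXm]
    exact ind_integral μ hcom
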